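/- arXiv:2407.06500 — 2 statements merged into one kernel-verified Lean document; each statement's English description precedes it below -/
import Mathlib

section
/- In the coupled scalar adaptive system T·ṡ + (1+k)·s = f̃/m, f̃̇ = −(γ/m)·s, the state (s, f̃) satisfies s(t) → 0 as t → ∞. -/
open Filter Real

/-!
After normalising, the system reads `s' = a f - b s`, `f' = -c s` with `a, b, c > 0`. The energy
`c s² + a f²` only satisfies `E' = -2bc s² ≤ 0`, but adding a small cross term `-s f` gives a
strict Lyapunov function `V`: it is positive definite and `V' ≤ -α V`. Grönwall's inequality then
makes `V`, hence `s²`, decay exponentially.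
-/

theorem le_mul_exp_of_hasDerivAt_le {V V' : ℝ → ℝ} {K : ℝ}
    (hV : ∀ t, 0 ≤ t → HasDerivAt V (V' t) t) (hle : ∀ t, 0 ≤ t → V' t ≤ K * V t)
    {t : ℝ} (ht : 0 ≤ t) : V t ≤ V 0 * exp (K * t) := by
  have h := le_gronwallBound_of_liminf_deriv_right_le (f' := V') (ε := 0) (b := t)
    (fun x hx => (hV x hx.1).continuousAt.continuousWithinAt)
    (fun x hx _ hr => (hV x hx.1).hasDerivWithinAt.liminf_right_slope_le hr) le_rfl
    (fun x hx => by simpa using hle x hx.1) t ⟨ht, le_rfl⟩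
  rwa [gronwallBound_ε0, sub_zero] at h

theorem tendsto_zero_of_sq_tendsto_zero {α : Type*} {l : Filter α} {u : α → ℝ}
    (h : Tendsto (fun x => u x ^ 2) l (nhds 0)) : Tendsto u l (nhds 0) := by
  rw [tendsto_zero_iff_abs_tendsto_zero]
  simpa [sqrt_sq_eq_abs, Function.comp_def] using h.sqrt

section Lyapunov

/-- The weights `p = lyapunovCoeffS b c` and `q = lyapunovCoeffF a b c` make the derivative of
`lyapunov` along solutions equal to `-(s² + a f²)`: `2 b p = c + 1` cancels the `s²` terms and
`2 c q = 2 a p + b` the `s f` terms. -/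
noncomputable def lyapunovCoeffS (b c : ℝ) : ℝ := (c + 1) / (2 * b)

noncomputable def lyapunovCoeffF (a b c : ℝ) : ℝ := (2 * lyapunovCoeffS b c * a + b) / (2 * c)

noncomputable def lyapunov (a b c x y : ℝ) : ℝ :=
  lyapunovCoeffS b c * x ^ 2 + lyapunovCoeffF a b c * y ^ 2 - x * y

variable {a b c : ℝ}

theorem two_mul_mul_lyapunovCoeffS (hb : b ≠ 0) : 2 * b * lyapunovCoeffS b c = c + 1 := by
  unfold lyapunovCoeffS
  field_simp

theorem two_mul_mul_lyapunovCoeffF (hc : c ≠ 0) :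
    2 * c * lyapunovCoeffF a b c = 2 * a * lyapunovCoeffS b c + b := by
  unfold lyapunovCoeffF
  field_simp

theorem lyapunovCoeffS_pos (hb : 0 < b) (hc : 0 < c) : 0 < lyapunovCoeffS b c := by
  unfold lyapunovCoeffS
  positivity

theorem lyapunovCoeffF_pos (ha : 0 < a) (hb : 0 < b) (hc : 0 < c) :
    0 < lyapunovCoeffF a b c := by
  have := lyapunovCoeffS_pos hb hc
  unfold lyapunovCoeffF
  positivity

theorem hasDerivAt_lyapunov (hb : b ≠ 0) (hc : c ≠ 0) {s f : ℝ → ℝ} {t : ℝ}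
    (hs : HasDerivAt s (a * f t - b * s t) t) (hf : HasDerivAt f (-c * s t) t) :
    HasDerivAt (fun t => lyapunov a b c (s t) (f t)) (-(s t ^ 2 + a * f t ^ 2)) t := by
  refine ((((hs.pow 2).const_mul (lyapunovCoeffS b c)).add
    ((hf.pow 2).const_mul (lyapunovCoeffF a b c))).sub (hs.mul hf)).congr_deriv ?_
  push_cast
  linear_combination (-s t ^ 2) * two_mul_mul_lyapunovCoeffS (c := c) hb
    - s t * f t * two_mul_mul_lyapunovCoeffF (a := a) (b := b) hc

theorem exists_pos_mul_sq_le_lyapunov (ha : 0 < a) (hb : 0 < b) (hc : 0 < c) :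
    ∃ δ > 0, ∀ x y, δ * x ^ 2 ≤ lyapunov a b c x y := by
  set p := lyapunovCoeffS b c
  set q := lyapunovCoeffF a b c
  have hp : 0 < p := lyapunovCoeffS_pos hb hc
  have hq : 0 < q := lyapunovCoeffF_pos ha hb hc
  have hpq : c * (4 * p * q) = 4 * a * p ^ 2 + c + 1 := by
    linear_combination 2 * p * two_mul_mul_lyapunovCoeffF (a := a) hc.ne'
      + two_mul_mul_lyapunovCoeffS (c := c) hb.ne'
  have hpq_gt : 1 < 4 * p * q := by nlinarith [mul_pos ha (mul_pos hp hp)]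
  refine ⟨p - 1 / (4 * q), ?_, fun x y => ?_⟩
  · rw [gt_iff_lt, sub_pos, div_lt_iff₀ (by positivity)]
    linarith
  · have hsq :
        4 * q * (lyapunov a b c x y - (p - 1 / (4 * q)) * x ^ 2) = (x - 2 * q * y) ^ 2 := by
      unfold lyapunov
      field_simp
      ring
    nlinarith [sq_nonneg (x - 2 * q * y)]

theorem exists_pos_mul_lyapunov_le (ha : 0 < a) (hb : 0 < b) (hc : 0 < c) :
    ∃ α > 0, ∀ x y, α * lyapunov a b c x y ≤ x ^ 2 + a * y ^ 2 := by
  set p := lyapunovCoeffS b c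
  set q := lyapunovCoeffF a b c
  have hp : 0 < p := lyapunovCoeffS_pos hb hc
  have hq : 0 < q := lyapunovCoeffF_pos ha hb hc
  refine ⟨min 1 a / (p + q + 1), by positivity, fun x y => ?_⟩
  have hV : lyapunov a b c x y ≤ (p + q + 1) * (x ^ 2 + y ^ 2) := by
    unfold lyapunov
    nlinarith [sq_nonneg (x + y), sq_nonneg x, sq_nonneg y]
  calc min 1 a / (p + q + 1) * lyapunov a b c x y
      ≤ min 1 a / (p + q + 1) * ((p + q + 1) * (x ^ 2 + y ^ 2)) := by gcongr
    _ = min 1 a * x ^ 2 + min 1 a * y ^ 2 := by field_simp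
    _ ≤ 1 * x ^ 2 + a * y ^ 2 := by gcongr <;> simp
    _ = x ^ 2 + a * y ^ 2 := by rw [one_mul]

end Lyapunov

theorem tendsto_zero_of_damped_coupled_system {a b c : ℝ} (ha : 0 < a) (hb : 0 < b) (hc : 0 < c)
    {s f : ℝ → ℝ} (hs : ∀ t, 0 ≤ t → HasDerivAt s (a * f t - b * s t) t)
    (hf : ∀ t, 0 ≤ t → HasDerivAt f (-c * s t) t) : Tendsto s atTop (nhds 0) := by
  obtain ⟨δ, hδ, hδV⟩ := exists_pos_mul_sq_le_lyapunov ha hb hc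
  obtain ⟨α, hα, hαV⟩ := exists_pos_mul_lyapunov_le ha hb hc
  set V := fun t => lyapunov a b c (s t) (f t)
  have hdecay : ∀ t, 0 ≤ t → V t ≤ V 0 * exp (-α * t) := fun t ht =>
    le_mul_exp_of_hasDerivAt_le
      (fun t ht => hasDerivAt_lyapunov hb.ne' hc.ne' (hs t ht) (hf t ht))
      (fun t _ => by linarith [hαV (s t) (f t)]) ht
  have hexp : Tendsto (fun t => V 0 / δ * exp (-α * t)) atTop (nhds 0) := by
    simpa using (tendsto_exp_atBot.comp
      (tendsto_id.const_mul_atTop_of_neg (neg_neg_of_pos hα))).const_mul (V 0 / δ)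
  refine tendsto_zero_of_sq_tendsto_zero
    (squeeze_zero' (Eventually.of_forall fun t => sq_nonneg (s t)) ?_ hexp)
  filter_upwards [eventually_ge_atTop 0] with t ht
  rw [div_mul_eq_mul_div, le_div_iff₀ hδ, mul_comm]
  exact (hδV _ _).trans (hdecay t ht)

theorem stmt3_general (T k γ m : ℝ) (hT : 0 < T) (hk : 0 < k) (hγ : 0 < γ) (hm : 0 < m)
    (s f s' : ℝ → ℝ)
    (hs : ∀ t, 0 ≤ t → HasDerivAt s (s' t) t)
    (hsys : ∀ t, 0 ≤ t → T * s' t + (1 + k) * s t = f t / m)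
    (hf : ∀ t, 0 ≤ t → HasDerivAt f (-(γ / m) * s t) t) :
    Tendsto s atTop (nhds 0) := by
  have hs_normalized : ∀ t, 0 ≤ t → HasDerivAt s (1 / (m * T) * f t - (1 + k) / T * s t) t := by
    intro t ht
    convert hs t ht using 1
    have hsys_t := hsys t ht
    field_simp at hsys_t ⊢
    linarith
  exact tendsto_zero_of_damped_coupled_system (by positivity) (by positivity) (by positivity)
    hs_normalized hf

/-- In the coupled scalar adaptive system T·ṡ + (1+k)·s = f̃/m, f̃̇ = −(γ/m)·s,
the sliding variable s(t) → 0 as t → ∞. -/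
theorem stmt3 (T k γ m : ℝ) (hT : 0 < T) (hk : 0 < k) (hγ : 0 < γ) (hm : 0 < m)
    (s f s' : ℝ → ℝ)
    (hs : ∀ t, 0 ≤ t → HasDerivAt s (s' t) t)
    (hsys : ∀ t, 0 ≤ t → T * s' t + (1 + k) * s t = f t / m)
    (hf : ∀ t, 0 ≤ t → HasDerivAt f (-(γ / m) * s t) t)
    (hs'c : ContinuousOn s' (Set.Ici 0)) :
    Tendsto s atTop (nhds 0) :=
  stmt3_general T k γ m hT hk hγ hm s f s' hs hsys hf
end

section
/- If V : ℝ≥0 → ℝ is differentiable, V(t) ≥ 0, and V̇(t) ≤ −c·s(t)² for some c > 0 where s is continuous, then ∫₀^∞ s(t)² dt ≤ V(0)/c; i.e., s is square-integrable. -/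
open MeasureTheory

/-- If V ≥ 0 is differentiable with V̇ ≤ −c·s² (c > 0, s continuous), then
s is square-integrable on [0,∞) with ∫₀^∞ s² ≤ V(0)/c. -/
theorem stmt10 (V V' s : ℝ → ℝ) (c : ℝ) (hc : 0 < c)
    (hV : ∀ t, 0 ≤ t → HasDerivAt V (V' t) t)
    (hVpos : ∀ t, 0 ≤ t → 0 ≤ V t)
    (hscont : ContinuousOn s (Set.Ici 0))
    (hineq : ∀ t, 0 ≤ t → V' t ≤ -c * (s t) ^ 2) :
    IntegrableOn (fun t => (s t) ^ 2) (Set.Ici 0)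
      ∧ ∫ t in Set.Ici (0 : ℝ), (s t) ^ 2 ≤ V 0 / c := by
  set f : ℝ → ℝ := fun t => (s t) ^ 2 with hfdef
  have hfcont : ContinuousOn f (Set.Ici 0) := hscont.pow 2
  have hfnonneg : ∀ t, 0 ≤ f t := fun t => sq_nonneg _
  have hfint : ∀ T : ℝ, IntegrableOn f (Set.Icc 0 T) := fun T =>
    (hfcont.mono Set.Icc_subset_Ici_self).integrableOn_compact isCompact_Icc
  have hfii : ∀ T : ℝ, 0 ≤ T → IntervalIntegrable f volume 0 T := by
    intro T hT
    rw [intervalIntegrable_iff_integrableOn_Icc_of_le hT]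
    exact hfint T
  -- the auxiliary function g = V + c • primitive of f is antitone on [0, ∞)
  set F : ℝ → ℝ := fun t => ∫ x in (0:ℝ)..t, f x with hFdef
  have hFcont : ContinuousOn F (Set.Ici 0) := by
    intro t ht
    have h1 : ContinuousOn F (Set.Icc 0 (t + 1)) := by
      have := intervalIntegral.continuousOn_primitive_interval (a := (0:ℝ)) (b := t + 1)
        (μ := volume) (f := f) (by rw [Set.uIcc_of_le (by linarith [ht.out])]; exact hfint _)
      rwa [Set.uIcc_of_le (by linarith [ht.out])] at this
    have h2 : Set.Icc (0:ℝ) (t + 1) ∈ nhdsWithin t (Set.Ici 0) := by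
      rw [show Set.Icc (0:ℝ) (t+1) = Set.Ici 0 ∩ Set.Iic (t+1) from rfl]
      exact Filter.inter_mem self_mem_nhdsWithin
        (mem_nhdsWithin_of_mem_nhds (Iic_mem_nhds (by linarith [ht.out])))
    exact (h1 t ⟨ht, by linarith [ht.out]⟩).mono_of_mem_nhdsWithin h2
  set g : ℝ → ℝ := fun t => V t + c * F t with hgdef
  have hgderiv : ∀ t, 0 < t → HasDerivAt g (V' t + c * f t) t := by
    intro t ht
    have hFt : HasDerivAt F (f t) t := by
      refine intervalIntegral.integral_hasDerivAt_right (hfii t ht.le)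
        ?_ (hfcont.continuousAt (Ici_mem_nhds ht))
      exact ⟨Set.Icc (t/2) (t+1), Icc_mem_nhds (by linarith) (by linarith),
        ((hfcont.mono (fun x hx => le_trans (by linarith) hx.1)).aestronglyMeasurable
          measurableSet_Icc)⟩
    exact (hV t ht.le).add ((hFt.const_mul c))
  have hganti : AntitoneOn g (Set.Ici 0) := by
    apply antitoneOn_of_deriv_nonpos (convex_Ici 0)
    · exact ContinuousOn.add (fun t ht => ((hV t ht).continuousAt).continuousWithinAt)
        (continuousOn_const.mul hFcont)
    · intro t ht
      rw [interior_Ici] at ht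
      exact ((hgderiv t ht).differentiableAt).differentiableWithinAt
    · intro t ht
      rw [interior_Ici] at ht
      rw [(hgderiv t ht).deriv]
      have h1 := hineq t ht.le
      have h2 : f t = s t ^ 2 := rfl
      nlinarith [hfnonneg t]
  -- key bound on finite intervals
  have key : ∀ T : ℝ, 0 ≤ T → ∫ x in (0:ℝ)..T, f x ≤ V 0 / c := by
    intro T hT
    have := hganti (Set.self_mem_Ici) (Set.mem_Ici.mpr hT) hT
    have hF0 : F 0 = 0 := intervalIntegral.integral_same
    have hVT := hVpos T hT
    simp only [hgdef, hF0, mul_zero, add_zero] at this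
    show F T ≤ V 0 / c
    rw [le_div_iff₀ hc]
    nlinarith
  have hnorm : ∀ T : ℝ, 0 ≤ T → ∫ x in (0:ℝ)..T, ‖f x‖ ≤ V 0 / c := by
    intro T hT
    have : ∀ x ∈ Set.Icc (0:ℝ) T, ‖f x‖ = f x := fun x _ => Real.norm_of_nonneg (hfnonneg x)
    rw [intervalIntegral.integral_congr (g := f) ?_]
    · exact key T hT
    · intro x hx
      rw [Set.uIcc_of_le hT] at hx
      exact Real.norm_of_nonneg (hfnonneg x)
  have hIoi : IntegrableOn f (Set.Ioi (0:ℝ)) := by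
    apply integrableOn_Ioi_of_intervalIntegral_norm_bounded (V 0 / c) 0
      (b := fun n : ℕ => (n : ℝ)) (fun i => (hfint i).mono_set Set.Ioc_subset_Icc_self)
      tendsto_natCast_atTop_atTop
    filter_upwards [Filter.eventually_ge_atTop 0] with n hn
    exact hnorm n (Nat.cast_nonneg n)
  have hIci : IntegrableOn f (Set.Ici (0:ℝ)) := by
    rwa [integrableOn_Ici_iff_integrableOn_Ioi]
  refine ⟨hIci, ?_⟩
  rw [integral_Ici_eq_integral_Ioi]
  have htend := intervalIntegral_tendsto_integral_Ioi (μ := volume) 0 hIoi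
    (tendsto_natCast_atTop_atTop (R := ℝ))
  refine le_of_tendsto htend ?_
  filter_upwards [Filter.eventually_ge_atTop 0] with n hn
  exact key n (Nat.cast_nonneg n)
end
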